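/- For 0 < p < 1/2 and 0 ≤ e ≤ 1, the function D(x) = H(x*p) - (1-e)·H(x) - H(p) is convex on [0,1] if and only if e ≤ 4p(1-p). -/

import Mathlib

open Real Set

/-- Binary entropy function (base 2). -/
noncomputable def binH (t : ℝ) : ℝ := -(t * Real.logb 2 t) - (1 - t) * Real.logb 2 (1 - t)

/-- Binary convolution x*p = x(1-p)+p(1-x). -/
def bconv (x p : ℝ) : ℝ := x * (1 - p) + p * (1 - x)

/-- D(x) = H(x*p) - (1-e) H(x) - H(p). -/
noncomputable def Dfun (p e x : ℝ) : ℝ := binH (bconv x p) - (1 - e) * binH x - binH p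

/-! With `h = binEntropy` (in nats), `Dfun p e x = (h (x*p) - (1-e) h x - h p) / log 2` and
`h'' t = -1 / (t (1 - t))`. Since `x ↦ x*p` is affine with slope `1 - 2p`, convexity on `[0,1]`
amounts to `(1-2p)² x(1-x) ≤ (1-e) y(1-y)` for `y = x*p` and all `x ∈ (0,1)`. The identity
`y(1-y) = (1-2p)² x(1-x) + p(1-p)` makes this linear in `q = x(1-x) ∈ (0, 1/4]`; the binding case
is `q = 1/4`, i.e. `x = 1/2`, where it reads `e ≤ 1 - (1-2p)² = 4p(1-p)`. -/

theorem convexOn_iff_hasDerivAt2_nonneg {s : Set ℝ} {f f' f'' : ℝ → ℝ} (hs : Convex ℝ s)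
    (hf : ContinuousOn f s) (hf' : ∀ x ∈ interior s, HasDerivAt f (f' x) x)
    (hf'' : ∀ x ∈ interior s, HasDerivAt f' (f'' x) x) :
    ConvexOn ℝ s f ↔ ∀ x ∈ interior s, 0 ≤ f'' x := by
  refine ⟨fun hconv x hx => ?_, convexOn_of_hasDerivWithinAt2_nonneg hs hf
    (fun x hx => (hf' x hx).hasDerivWithinAt) (fun x hx => (hf'' x hx).hasDerivWithinAt)⟩
  have hmono : MonotoneOn f' (interior s) := by
    have := (hconv.subset interior_subset hs.interior).monotoneOn_deriv
      fun y hy => (hf' y hy).differentiableAt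
    intro a ha b hb hab
    simpa only [(hf' a ha).deriv, (hf' b hb).deriv] using this ha hb hab
  rw [← (hf'' x hx).hasDerivWithinAt.derivWithin (isOpen_interior.uniqueDiffWithinAt hx)]
  exact hmono.derivWithin_nonneg

lemma ne_zero_one_of_mem_Ioo {t : ℝ} (ht : t ∈ Ioo 0 1) : t ≠ 0 ∧ t ≠ 1 :=
  ⟨ht.1.ne', ht.2.ne⟩

lemma hasDerivAt_deriv_binEntropy {t : ℝ} (h₀ : t ≠ 0) (h₁ : t ≠ 1) :
    HasDerivAt (deriv binEntropy) (deriv^[2] binEntropy t) t := by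
  have h₁' : 1 - t ≠ 0 := sub_ne_zero.2 h₁.symm
  have : DifferentiableAt ℝ (deriv binEntropy) t := by
    rw [funext deriv_binEntropy]
    fun_prop (disch := assumption)
  exact this.hasDerivAt

lemma hasDerivAt_bconv (p x : ℝ) : HasDerivAt (bconv · p) (1 - 2 * p) x := by
  have : (bconv · p) = fun y => p + (1 - 2 * p) * y := by
    funext y
    simp only [bconv]
    ring
  simpa only [this, mul_one] using ((hasDerivAt_id' x).const_mul (1 - 2 * p)).const_add p

lemma bconv_mem_Ioo {p x : ℝ} (hp : p ∈ Icc 0 1) (hx : x ∈ Ioo 0 1) :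
    bconv x p ∈ Ioo 0 1 := by
  obtain ⟨hp₀, hp₁⟩ := hp
  obtain ⟨hx₀, hx₁⟩ := hx
  have hq : 0 < x * (1 - x) := mul_pos hx₀ (sub_pos.2 hx₁)
  constructor <;> unfold bconv <;> nlinarith [mul_nonneg (sub_nonneg.2 hp₁) (sq_nonneg x),
    mul_nonneg hp₀ (sq_nonneg (1 - x)), mul_nonneg hp₀ (sq_nonneg x),
    mul_nonneg (sub_nonneg.2 hp₁) (sq_nonneg (1 - x))]

lemma bconv_mul_one_sub (x p : ℝ) :
    bconv x p * (1 - bconv x p) = (1 - 2 * p) ^ 2 * (x * (1 - x)) + p * (1 - p) := by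
  unfold bconv; ring

lemma forall_sq_mul_le_bconv_iff {p e : ℝ} (hp : p ∈ Icc 0 1) :
    (∀ x ∈ Ioo (0 : ℝ) 1,
        (1 - 2 * p) ^ 2 * (x * (1 - x)) ≤ (1 - e) * (bconv x p * (1 - bconv x p))) ↔
      e ≤ 4 * p * (1 - p) := by
  constructor
  · intro h
    have := h (1 / 2) ⟨by norm_num, by norm_num⟩
    simp only [bconv] at this
    nlinarith
  · intro he x hx
    obtain ⟨hp₀, hp₁⟩ := hp
    have hq : 0 < x * (1 - x) := mul_pos hx.1 (sub_pos.2 hx.2)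
    have hq' : x * (1 - x) ≤ 1 / 4 := by nlinarith [sq_nonneg (2 * x - 1)]
    rw [bconv_mul_one_sub]
    -- the slack is `e (1-2p)² (1/4 - q) + (4p(1-p) - e)/4`, also `= (1-e) p(1-p) - e (1-2p)² q`
    rcases le_or_gt 0 e with he₀ | he₀
    · nlinarith [mul_nonneg (mul_nonneg he₀ (sq_nonneg (1 - 2 * p))) (sub_nonneg.2 hq')]
    · nlinarith [mul_nonneg (mul_nonneg hp₀ (sub_nonneg.2 hp₁)) (sub_nonneg.2 he₀.le)]

lemma binH_eq_binEntropy_div (t : ℝ) : binH t = binEntropy t / log 2 := by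
  simp only [binH, binEntropy, logb, log_inv]
  ring

lemma Dfun_eq (p e x : ℝ) :
    Dfun p e x = (binEntropy (bconv x p) - (1 - e) * binEntropy x - binEntropy p) / log 2 := by
  simp only [Dfun, binH_eq_binEntropy_div]
  ring

lemma continuous_Dfun (p e : ℝ) : Continuous (Dfun p e) := by
  simp only [funext (Dfun_eq p e), bconv]
  fun_prop

lemma hasDerivAt_Dfun {p e x : ℝ} (hp : p ∈ Icc 0 1) (hx : x ∈ Ioo 0 1) :
    HasDerivAt (Dfun p e)
      (((1 - 2 * p) * deriv binEntropy (bconv x p) - (1 - e) * deriv binEntropy x) / log 2) x := by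
  obtain ⟨hy₀, hy₁⟩ := ne_zero_one_of_mem_Ioo (bconv_mem_Ioo hp hx)
  obtain ⟨hx₀, hx₁⟩ := ne_zero_one_of_mem_Ioo hx
  have hdy := (differentiableAt_binEntropy hy₀ hy₁).hasDerivAt.comp x (hasDerivAt_bconv p x)
  have hdx := (differentiableAt_binEntropy hx₀ hx₁).hasDerivAt
  rw [funext (Dfun_eq p e)]
  exact (((hdy.fun_sub (hdx.const_mul (1 - e))).sub_const (binEntropy p)).div_const
    (log 2)).congr_deriv (by ring)

lemma hasDerivAt_deriv_Dfun {p e x : ℝ} (hp : p ∈ Icc 0 1) (hx : x ∈ Ioo 0 1) :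
    HasDerivAt
      (fun x => ((1 - 2 * p) * deriv binEntropy (bconv x p) - (1 - e) * deriv binEntropy x) / log 2)
      (((1 - 2 * p) ^ 2 * deriv^[2] binEntropy (bconv x p) - (1 - e) * deriv^[2] binEntropy x)
        / log 2) x := by
  obtain ⟨hy₀, hy₁⟩ := ne_zero_one_of_mem_Ioo (bconv_mem_Ioo hp hx)
  obtain ⟨hx₀, hx₁⟩ := ne_zero_one_of_mem_Ioo hx
  have hdy := (hasDerivAt_deriv_binEntropy hy₀ hy₁).comp x (hasDerivAt_bconv p x)
  have hdx := hasDerivAt_deriv_binEntropy hx₀ hx₁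
  exact (((hdy.const_mul (1 - 2 * p)).fun_sub (hdx.const_mul (1 - e))).div_const
    (log 2)).congr_deriv (by ring)

lemma deriv2_Dfun_nonneg_iff {p e x : ℝ} (hp : p ∈ Icc 0 1) (hx : x ∈ Ioo 0 1) :
    0 ≤ ((1 - 2 * p) ^ 2 * deriv^[2] binEntropy (bconv x p) - (1 - e) * deriv^[2] binEntropy x)
        / log 2 ↔
      (1 - 2 * p) ^ 2 * (x * (1 - x)) ≤ (1 - e) * (bconv x p * (1 - bconv x p)) := by
  obtain ⟨hy₀, hy₁⟩ := bconv_mem_Ioo hp hx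
  have hX : 0 < x * (1 - x) := mul_pos hx.1 (sub_pos.2 hx.2)
  have hY : 0 < bconv x p * (1 - bconv x p) := mul_pos hy₀ (sub_pos.2 hy₁)
  calc _ ↔ 0 ≤ (1 - 2 * p) ^ 2 * deriv^[2] binEntropy (bconv x p)
          - (1 - e) * deriv^[2] binEntropy x := by
        rw [le_div_iff₀ (log_pos one_lt_two), zero_mul]
    _ ↔ (1 - 2 * p) ^ 2 / (bconv x p * (1 - bconv x p)) ≤ (1 - e) / (x * (1 - x)) := by
        rw [deriv2_binEntropy, deriv2_binEntropy, ← sub_nonneg (b := (1 - 2 * p) ^ 2 / _)]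
        exact Iff.of_eq (congrArg _ (by ring))
    _ ↔ _ := div_le_div_iff₀ hY hX

theorem stmt11_general (p e : ℝ) (hp0 : 0 < p) (hp1 : p < 1 / 2) :
    ConvexOn ℝ (Set.Icc (0 : ℝ) 1) (fun x => Dfun p e x) ↔ e ≤ 4 * p * (1 - p) := by
  have hp : p ∈ Icc (0 : ℝ) 1 := ⟨hp0.le, by linarith⟩
  have hint : interior (Icc (0 : ℝ) 1) = Ioo 0 1 := interior_Icc
  rw [convexOn_iff_hasDerivAt2_nonneg (convex_Icc 0 1) (continuous_Dfun p e).continuousOn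
      (fun x hx => hasDerivAt_Dfun hp (hint ▸ hx))
      (fun x hx => hasDerivAt_deriv_Dfun hp (hint ▸ hx)),
    hint, ← forall_sq_mul_le_bconv_iff hp]
  exact forall₂_congr fun x hx => deriv2_Dfun_nonneg_iff hp hx

/-- D is convex on [0,1] iff e ≤ 4p(1-p). -/
theorem stmt11 (p e : ℝ) (hp0 : 0 < p) (hp1 : p < 1 / 2) (he0 : 0 ≤ e) (he1 : e ≤ 1) :
    ConvexOn ℝ (Set.Icc (0 : ℝ) 1) (fun x => Dfun p e x) ↔ e ≤ 4 * p * (1 - p) :=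
  stmt11_general p e hp0 hp1
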